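/- Let a, α ∈ ℝ and b > 0, and define F : U → ℝ³ on a neighborhood U of the origin in ℝ³ (coordinates (ρ, x, y), with 1 + aρ²y ≠ 0 on U) by F(ρ, x, y) = ( ρ(x−1)·[b + aρ⁴y²/(1+aρ²y)], y·(1 + αρ²y + ρ²x(x−1)) − x(x−1)·[b + aρ⁴y²/(1+aρ²y)], −y(x−1)·( 2[b + aρ⁴y²/(1+aρ²y)] − yρ² ) ). Then F(0,0,0) = 0 and the Fréchet derivative of F at the origin is the linear map represented by the matrix [[−b, 0, 0], [0, b, 1], [0, 0, 2b]], whose characteristic polynomial is (X + b)(X − b)(X − 2b); in particular its eigenvalues are −b, b and 2b. -/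
import Mathlib


open Real Polynomial

/-- The desingularized vector field in the entry chart `κ₁` (`q̄ = 1`) of the secondary
blowup for the aircraft ground-dynamics system, in coordinates `v = (ρ, x, y)`. -/
noncomputable def F12 (a α b : ℝ) (v : Fin 3 → ℝ) : Fin 3 → ℝ :=
  ![v 0 * (v 1 - 1) * (b + a * (v 0) ^ 4 * (v 2) ^ 2 / (1 + a * (v 0) ^ 2 * v 2)),
    v 2 * (1 + α * (v 0) ^ 2 * v 2 + (v 0) ^ 2 * v 1 * (v 1 - 1)) -
      v 1 * (v 1 - 1) * (b + a * (v 0) ^ 4 * (v 2) ^ 2 / (1 + a * (v 0) ^ 2 * v 2)),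
    -(v 2) * (v 1 - 1) *
      (2 * (b + a * (v 0) ^ 4 * (v 2) ^ 2 / (1 + a * (v 0) ^ 2 * v 2)) - v 2 * (v 0) ^ 2)]

/-- The linearization matrix of `F12` at the origin. -/
noncomputable def M12 (b : ℝ) : Matrix (Fin 3) (Fin 3) ℝ :=
  !![-b, 0, 0; 0, b, 1; 0, 0, 2 * b]

set_option maxHeartbeats 1000000 in
lemma hasFDerivAt_F12 (a α b : ℝ) : HasFDerivAt (F12 a α b)
    (LinearMap.toContinuousLinearMap (Matrix.toLin' (M12 b))) 0 := by
  have hp0 : HasFDerivAt (fun v : Fin 3 → ℝ => v 0)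
      (ContinuousLinearMap.proj (R := ℝ) 0) 0 := hasFDerivAt_apply (𝕜 := ℝ) (0 : Fin 3) 0
  have hp1 : HasFDerivAt (fun v : Fin 3 → ℝ => v 1)
      (ContinuousLinearMap.proj (R := ℝ) 1) 0 := hasFDerivAt_apply (𝕜 := ℝ) (1 : Fin 3) 0
  have hp2 : HasFDerivAt (fun v : Fin 3 → ℝ => v 2)
      (ContinuousLinearMap.proj (R := ℝ) 2) 0 := hasFDerivAt_apply (𝕜 := ℝ) (2 : Fin 3) 0
  have h02 : HasFDerivAt (fun v : Fin 3 → ℝ => v 0 ^ 2) _ 0 :=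
    (hasDerivAt_pow 2 _).comp_hasFDerivAt 0 hp0
  have h04 : HasFDerivAt (fun v : Fin 3 → ℝ => v 0 ^ 4) _ 0 :=
    (hasDerivAt_pow 4 _).comp_hasFDerivAt 0 hp0
  have h22 : HasFDerivAt (fun v : Fin 3 → ℝ => v 2 ^ 2) _ 0 :=
    (hasDerivAt_pow 2 _).comp_hasFDerivAt 0 hp2
  have hnum := (h04.const_mul a).mul h22
  have hden := ((h02.const_mul a).mul hp2).const_add 1
  have hne : (1 : ℝ) + a * ((0 : Fin 3 → ℝ) 0) ^ 2 * ((0 : Fin 3 → ℝ) 2) ≠ 0 := by norm_num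
  have hinv : HasFDerivAt (fun v : Fin 3 → ℝ => (1 + a * v 0 ^ 2 * v 2)⁻¹) _ 0 :=
    (hasDerivAt_inv hne).comp_hasFDerivAt 0 hden
  have hG := (hnum.mul hinv).const_add b
  have hfun : F12 a α b = fun v : Fin 3 → ℝ =>
      ![v 0 * (v 1 - 1) * (b + a * (v 0) ^ 4 * (v 2) ^ 2 * (1 + a * (v 0) ^ 2 * v 2)⁻¹),
        v 2 * (1 + α * (v 0) ^ 2 * v 2 + (v 0) ^ 2 * v 1 * (v 1 - 1)) -
          v 1 * (v 1 - 1) * (b + a * (v 0) ^ 4 * (v 2) ^ 2 * (1 + a * (v 0) ^ 2 * v 2)⁻¹),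
        -(v 2) * (v 1 - 1) *
          (2 * (b + a * (v 0) ^ 4 * (v 2) ^ 2 * (1 + a * (v 0) ^ 2 * v 2)⁻¹) - v 2 * (v 0) ^ 2)] := by
    funext v
    simp only [F12, div_eq_mul_inv]
  rw [hfun, hasFDerivAt_pi']
  intro i
  fin_cases i
  · simp only [Matrix.cons_val_zero]
    refine ((hp0.mul (hp1.sub_const 1)).mul hG).congr_fderiv ?_
    ext v
    simp [M12, Matrix.toLin'_apply, Matrix.mulVec, dotProduct, Fin.sum_univ_three,
      smul_eq_mul]
  · simp only [Matrix.cons_val_one, Matrix.head_cons]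
    refine ((hp2.mul ((((h02.const_mul α).mul hp2).const_add 1).add
        ((h02.mul hp1).mul (hp1.sub_const 1)))).sub
        ((hp1.mul (hp1.sub_const 1)).mul hG)).congr_fderiv ?_
    ext v
    simp [M12, Matrix.toLin'_apply, Matrix.mulVec, dotProduct, Fin.sum_univ_three,
      smul_eq_mul]
    ring
  · simp only [Matrix.cons_val_two, Matrix.tail_cons, Matrix.head_cons]
    refine ((hp2.neg.mul (hp1.sub_const 1)).mul
        ((hG.const_mul 2).sub (hp2.mul h02))).congr_fderiv ?_
    ext v
    simp [M12, Matrix.toLin'_apply, Matrix.mulVec, dotProduct, Fin.sum_univ_three,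
      smul_eq_mul]

/-- `F12` vanishes at the origin; its Fréchet derivative there is the linear map given by
the matrix `[[−b,0,0],[0,b,1],[0,0,2b]]`, whose characteristic polynomial is
`(X + b)(X − b)(X − 2b)`; in particular its eigenvalues are `−b`, `b` and `2b`. -/
theorem stmt12 (a α b : ℝ) (hb : 0 < b) :
    F12 a α b 0 = 0 ∧
    HasFDerivAt (F12 a α b)
      (LinearMap.toContinuousLinearMap (Matrix.toLin' (M12 b))) 0 ∧
    (M12 b).charpoly = (X + C b) * (X - C b) * (X - C (2 * b)) ∧
    Module.End.HasEigenvalue (Matrix.toLin' (M12 b)) (-b) ∧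
    Module.End.HasEigenvalue (Matrix.toLin' (M12 b)) b ∧
    Module.End.HasEigenvalue (Matrix.toLin' (M12 b)) (2 * b) := by
  refine ⟨?_, hasFDerivAt_F12 a α b, ?_, ?_, ?_, ?_⟩
  · funext i; fin_cases i <;> simp [F12]
  · rw [Matrix.charpoly, Matrix.det_fin_three]
    simp [Matrix.charmatrix_apply, M12, Matrix.diagonal]
  · apply Module.End.hasEigenvalue_of_hasEigenvector (x := ![1, 0, 0])
    refine ⟨?_, ?_⟩
    · rw [Module.End.mem_eigenspace_iff]
      funext i
      fin_cases i <;>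
        simp [Matrix.toLin'_apply, Matrix.mulVec, M12, dotProduct, Fin.sum_univ_three]
    · intro h; have := congrFun h 0; simp at this
  · apply Module.End.hasEigenvalue_of_hasEigenvector (x := ![0, 1, 0])
    refine ⟨?_, ?_⟩
    · rw [Module.End.mem_eigenspace_iff]
      funext i
      fin_cases i <;>
        simp [Matrix.toLin'_apply, Matrix.mulVec, M12, dotProduct, Fin.sum_univ_three]
    · intro h; have := congrFun h 1; simp at this
  · apply Module.End.hasEigenvalue_of_hasEigenvector (x := ![0, 1, b])
    refine ⟨?_, ?_⟩
    · rw [Module.End.mem_eigenspace_iff]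
      funext i
      fin_cases i <;>
        simp [Matrix.toLin'_apply, Matrix.mulVec, M12, dotProduct, Fin.sum_univ_three] <;>
        ring
    · intro h; have := congrFun h 1; simp at this
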